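/- Consider the two-cluster extended model (u,e¹,e²) on a finite connected graph 𝒢=(V,E) with nonempty boundary ∂⊆V and weight w, with boundary condition 1, assuming max(0,p_{xy}+q_{xy}−1) ≤ c_{xy} ≤ min(p_{xy},q_{xy}) pointwise. For z∈V and i∈{1,2}, define the map σ̄_i^z(u,e¹,e²) = (σ_i^z(u), e¹, e²), where σ_i^z(u) = u if the cluster C_i^z of z in the bonds eⁱ contains a boundary vertex, and otherwise σ_i^z(u)_y = R_i(u_y) for every y∈C_i^z and σ_i^z(u)_y = u_y for y∉C_i^z. Then σ̄_1^z and σ̄_2^z preserve the joint law of (u,e¹,e²). -/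

import Mathlib

open MeasureTheory Real

noncomputable section

instance : Fact (0 < 2 * π) := ⟨by positivity⟩

noncomputable instance : MeasureSpace Real.Angle :=
  (inferInstance : MeasureSpace (AddCircle (2 * π)))

/-- The spin space: the unit circle, represented by angles in `ℝ/2πℤ`. -/
abbrev Spin : Type := Real.Angle

/-- A weight function for an O(2) model, expressed through angles:
`w(e^{iθ₁}, e^{iθ₂}) = W(θ₁ - θ₂)`.  Rotation invariance is automatic; symmetry
and reflection invariance of `w` correspond to `W` being even, and the
monotonicity assumption on `θ ↦ w(1, e^{iθ})` corresponds to `W` being strictly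
decreasing on `[0, π]`. -/
structure IsWeight (W : Spin → ℝ) : Prop where
  pos : ∀ s, 0 < W s
  even : ∀ s, W (-s) = W s
  cont : Continuous W
  anti : StrictAntiOn (fun x : ℝ => W (x : Spin)) (Set.Icc 0 π)

variable {V : Type} [Fintype V] [LinearOrder V]

/-- Base measure on spin configurations: boundary spins are fixed to `1`
(angle `0`), the other spins get the Haar measure of the circle. -/
def spinBase (B : Finset V) : Measure (V → Spin) :=
  Measure.pi fun v => if v ∈ B then Measure.dirac (0 : Spin) else volume

/-- Density of the spin measure. -/
def spinDensity (G : SimpleGraph V) [DecidableRel G.Adj] (W : Spin → ℝ) (θ : V → Spin) : ENNReal :=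
  ∏ e ∈ G.edgeFinset, ENNReal.ofReal (W (θ e.inf - θ e.sup))

/-- One-cluster bond opening probability
`p(u₁,u₂) = (1 - w(R u₁, u₂)/w(u₁,u₂)) 1_{Re u₁ · Re u₂ > 0}`, where `R z = -conj z`. -/
def pBond (W : Spin → ℝ) (u₁ u₂ : Spin) : ℝ :=
  if 0 < u₁.cos * u₂.cos then 1 - W (((π : ℝ) : Spin) - (u₁ + u₂)) / W (u₁ - u₂) else 0

/-- Two-cluster model: opening probability for bonds of the first family,
associated with the reflection `R₁ z = ξ² conj z`, `ξ = e^{iπ/4}`. -/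
def pBond2 (W : Spin → ℝ) (u₁ u₂ : Spin) : ℝ :=
  if 0 < (u₁ + ((π / 4 : ℝ) : Spin)).cos * (u₂ + ((π / 4 : ℝ) : Spin)).cos then
    1 - W (((π / 2 : ℝ) : Spin) - (u₁ + u₂)) / W (u₁ - u₂) else 0

/-- Two-cluster model: opening probability for bonds of the second family,
associated with the reflection `R₂ z = conj(ξ)² conj z`. -/
def qBond2 (W : Spin → ℝ) (u₁ u₂ : Spin) : ℝ :=
  if 0 < (u₁ - ((π / 4 : ℝ) : Spin)).cos * (u₂ - ((π / 4 : ℝ) : Spin)).cos then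
    1 - W (((-(π / 2) : ℝ) : Spin) - (u₁ + u₂)) / W (u₁ - u₂) else 0

/-- Two-cluster model: probability that both bonds are open. -/
def cBond2 (W : Spin → ℝ) (u₁ u₂ : Spin) : ℝ :=
  if 0 < (u₁ - ((π / 4 : ℝ) : Spin)).cos * (u₂ - ((π / 4 : ℝ) : Spin)).cos ∧
      0 < (u₁ + ((π / 4 : ℝ) : Spin)).cos * (u₂ + ((π / 4 : ℝ) : Spin)).cos then
    1 - (W (((π / 2 : ℝ) : Spin) - (u₁ + u₂)) + W (((-(π / 2) : ℝ) : Spin) - (u₁ + u₂))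
        - W (((π : ℝ) : Spin) + (u₁ - u₂))) / W (u₁ - u₂)
  else 0

/-- Conditional weight of a one-cluster bond configuration given the spins. -/
def bondWeight1 (G : SimpleGraph V) [DecidableRel G.Adj] (W : Spin → ℝ) (θ : V → Spin)
    (b : Sym2 V → Bool) : ENNReal :=
  ∏ e ∈ G.edgeFinset,
    ENNReal.ofReal (if b e then pBond W (θ e.inf) (θ e.sup) else 1 - pBond W (θ e.inf) (θ e.sup))

/-- Joint weight for a pair of bonds with marginals `Ber(p)`, `Ber(q)` and
`P(both open) = c`. -/
def pairWeight (p q c : ℝ) : Bool → Bool → ℝ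
  | true, true => c
  | true, false => p - c
  | false, true => q - c
  | false, false => 1 - p - q + c

/-- Conditional weight of a two-cluster bond configuration given the spins. -/
def bondWeight2 (G : SimpleGraph V) [DecidableRel G.Adj] (W : Spin → ℝ) (θ : V → Spin)
    (b : (Sym2 V → Bool) × (Sym2 V → Bool)) : ENNReal :=
  ∏ e ∈ G.edgeFinset,
    ENNReal.ofReal (pairWeight (pBond2 W (θ e.inf) (θ e.sup)) (qBond2 W (θ e.inf) (θ e.sup))
      (cBond2 W (θ e.inf) (θ e.sup)) (b.1 e) (b.2 e))

/-- Unnormalized one-cluster extended measure. -/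
def extAux1 (G : SimpleGraph V) [DecidableRel G.Adj] (W : Spin → ℝ) (B : Finset V) :
    Measure ((V → Spin) × (Sym2 V → Bool)) :=
  ((spinBase B).prod Measure.count).withDensity fun ω =>
    spinDensity G W ω.1 * bondWeight1 G W ω.1 ω.2

/-- The one-cluster extended model `(u, e)`: spins with density
`∏_{(xy)∈E} w(u_x,u_y)` and boundary condition `1`, together with bonds that
are open independently with probability `p(u_x,u_y)` given the spins. -/
def extP1 (G : SimpleGraph V) [DecidableRel G.Adj] (W : Spin → ℝ) (B : Finset V) :
    Measure ((V → Spin) × (Sym2 V → Bool)) :=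
  (extAux1 G W B Set.univ)⁻¹ • extAux1 G W B

/-- Unnormalized two-cluster extended measure. -/
def extAux2 (G : SimpleGraph V) [DecidableRel G.Adj] (W : Spin → ℝ) (B : Finset V) :
    Measure ((V → Spin) × ((Sym2 V → Bool) × (Sym2 V → Bool))) :=
  ((spinBase B).prod Measure.count).withDensity fun ω =>
    spinDensity G W ω.1 * bondWeight2 G W ω.1 ω.2

/-- The two-cluster extended model `(u, e¹, e²)`. -/
def extP2 (G : SimpleGraph V) [DecidableRel G.Adj] (W : Spin → ℝ) (B : Finset V) :
    Measure ((V → Spin) × ((Sym2 V → Bool) × (Sym2 V → Bool))) :=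
  (extAux2 G W B Set.univ)⁻¹ • extAux2 G W B

/-- The graph of open bonds. -/
def openGraph (G : SimpleGraph V) (b : Sym2 V → Bool) : SimpleGraph V where
  Adj u v := G.Adj u v ∧ b s(u, v) = true
  symm := ⟨fun u v h => ⟨h.1.symm, by rw [Sym2.eq_swap]; exact h.2⟩⟩
  loopless := ⟨fun u h => G.loopless.irrefl u h.1⟩

/-- `x` is joined to the boundary `B` by a path of open bonds. -/
def connToBdry (G : SimpleGraph V) (B : Finset V) (x : V) (b : Sym2 V → Bool) : Prop :=
  ∃ v ∈ B, (openGraph G b).Reachable x v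

end

noncomputable section

open scoped Classical in
/-- The swapping map `σ̄_i^z` of the two-cluster extended model, for a
reflection `r` of the circle and the bond family selected by `sel`: if the
cluster of `z` in the selected bonds touches the boundary, do nothing,
otherwise apply `r` to every spin of that cluster.  Bonds are unchanged. -/
def flipMap2 {V : Type} [Fintype V] [LinearOrder V] (G : SimpleGraph V) (B : Finset V) (z : V)
    (r : Spin → Spin) (sel : (Sym2 V → Bool) × (Sym2 V → Bool) → Sym2 V → Bool)
    (ω : (V → Spin) × ((Sym2 V → Bool) × (Sym2 V → Bool))) :
    (V → Spin) × ((Sym2 V → Bool) × (Sym2 V → Bool)) :=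
  if ∃ v ∈ B, (openGraph G (sel ω.2)).Reachable z v then ω
  else (fun y => if (openGraph G (sel ω.2)).Reachable z y then r (ω.1 y) else ω.1 y, ω.2)

/-!
Reflecting the spins of `C = C_i^z` (when `C` avoids the boundary) preserves the Haar base
measure, leaves the bonds untouched and is an involution, so it suffices that the density
`∏_{xy} w(u_x, u_y) P(e¹_{xy}, e²_{xy} | u)` is invariant for almost every `u`. Edges outside `C`
do not see the map, and edges inside `C` are invariant because `R_i` is an isometry that preserves
both "same side" relations. Edges leaving `C` are closed in family `i`; writing the edge factor
without division (`quadrantWeight`), reflecting one endpoint by `R₁` exchanges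
`w(u_x, u_y) ↔ w(R₁ u_x, u_y)` and `w(R₂ u_x, u_y) ↔ w(-u_x, u_y)` and moves `u_x` across the line
through `±ξ`, which leaves the entries with `e¹ = 0` unchanged; symmetrically for `R₂`. Spins on
the lines through `±ξ`, `±conj ξ` form a null set.
-/

local notation "π₄" => ((π / 4 : ℝ) : Spin)
local notation "π₂" => ((π / 2 : ℝ) : Spin)

lemma coe_pi_div_four_add_self : π₄ + π₄ = π₂ := by
  rw [← Real.Angle.coe_add]
  congr 1
  ring

lemma coe_pi_div_two_add_self : π₂ + π₂ = π := by
  rw [← Real.Angle.coe_add, add_halves]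

/-- `w(u_x, u_y) · P(e¹_{xy} = a, e²_{xy} = b | u)` without division, where `A = w(u_x, u_y)`,
`P = w(R₁ u_x, u_y)`, `Q = w(R₂ u_x, u_y)`, `M = w(-u_x, u_y)` and `s₁`, `s₂` say that `u_x, u_y`
lie on the same side of the lines through `±ξ` and `±conj ξ`. -/
def quadrantWeight (A P Q M : ℝ) (s₁ s₂ : Prop) [Decidable s₁] [Decidable s₂] : Bool → Bool → ℝ
  | true, true => if s₁ ∧ s₂ then A - P - Q + M else 0
  | true, false => if s₁ then (if s₂ then Q - M else A - P) else 0
  | false, true => if s₂ then (if s₁ then P - M else A - Q) else 0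
  | false, false => if s₁ then (if s₂ then M else P) else (if s₂ then Q else A)

section quadrantWeight

variable {A P Q M : ℝ} {s₁ s₂ s : Prop} [Decidable s₁] [Decidable s₂] [Decidable s]

lemma quadrantWeight_swap_first (hs : s ↔ ¬s₁) (b : Bool) :
    quadrantWeight P A M Q s s₂ false b = quadrantWeight A P Q M s₁ s₂ false b := by
  cases b <;> by_cases h₁ : s₁ <;> by_cases h₂ : s₂ <;> simp [quadrantWeight, hs, h₁, h₂]

lemma quadrantWeight_swap_second (hs : s ↔ ¬s₂) (a : Bool) :
    quadrantWeight Q M A P s₁ s a false = quadrantWeight A P Q M s₁ s₂ a false := by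
  cases a <;> by_cases h₁ : s₁ <;> by_cases h₂ : s₂ <;> simp [quadrantWeight, hs, h₁, h₂]

end quadrantWeight

def edgeWeight (W : Spin → ℝ) (u v : Spin) : Bool → Bool → ℝ :=
  quadrantWeight (W (u - v)) (W (π₂ - (u + v))) (W (-π₂ - (u + v))) (W (π + (u - v)))
    (0 < (u + π₄).cos * (v + π₄).cos) (0 < (u - π₄).cos * (v - π₄).cos)

lemma mul_pairWeight_eq_edgeWeight {W : Spin → ℝ} {u v : Spin} (hW : W (u - v) ≠ 0)
    (a b : Bool) :
    W (u - v) * pairWeight (pBond2 W u v) (qBond2 W u v) (cBond2 W u v) a b =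
      edgeWeight W u v a b := by
  simp only [pBond2, qBond2, cBond2, edgeWeight, Real.Angle.coe_neg]
  cases a <;> cases b <;> simp only [pairWeight, quadrantWeight] <;> split_ifs <;>
    first | tauto | (field_simp; ring)

section reflections

variable (x : Spin)

lemma cos_reflect₁_add : (π₂ - x + π₄).cos = -(x + π₄).cos := by
  rw [show π₂ - x + π₄ = -(x + π₄) + π by
    linear_combination (norm := module) coe_pi_div_two_add_self + coe_pi_div_four_add_self,
    Real.Angle.cos_add_pi, Real.Angle.cos_neg]

lemma cos_reflect₁_sub : (π₂ - x - π₄).cos = (x - π₄).cos := by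
  rw [show π₂ - x - π₄ = -(x - π₄) by
    linear_combination (norm := module) -coe_pi_div_four_add_self, Real.Angle.cos_neg]

lemma cos_reflect₂_add : (-π₂ - x + π₄).cos = (x + π₄).cos := by
  rw [show -π₂ - x + π₄ = -(x + π₄) by
    linear_combination (norm := module) coe_pi_div_four_add_self, Real.Angle.cos_neg]

lemma cos_reflect₂_sub : (-π₂ - x - π₄).cos = -(x - π₄).cos := by
  rw [show -π₂ - x - π₄ = -(x - π₄) + π by
    linear_combination (norm := module) -coe_pi_div_two_add_self - coe_pi_div_four_add_self
      - Real.Angle.coe_pi_add_coe_pi,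
    Real.Angle.cos_add_pi, Real.Angle.cos_neg]

end reflections

lemma neg_mul_pos_iff_not_mul_pos {a b : ℝ} (ha : a ≠ 0) (hb : b ≠ 0) :
    0 < -a * b ↔ ¬0 < a * b := by
  rw [neg_mul, neg_pos, not_lt, (mul_ne_zero ha hb).le_iff_lt]

section edgeWeight

variable {W : Spin → ℝ} (u v : Spin)

lemma edgeWeight_comm (hW : W.Even) : edgeWeight W u v = edgeWeight W v u := by
  have hM : π + (v - u) = -(π + (u - v)) := by
    linear_combination (norm := module) Real.Angle.coe_pi_add_coe_pi
  rw [edgeWeight, edgeWeight, hM, hW, ← neg_sub u v, hW, add_comm u v, mul_comm (u + π₄).cos,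
    mul_comm (u - π₄).cos]

lemma edgeWeight_reflect₁_reflect₁ (hW : W.Even) :
    edgeWeight W (π₂ - u) (π₂ - v) = edgeWeight W u v := by
  have hA : π₂ - u - (π₂ - v) = -(u - v) := by abel
  have hP : π₂ - (π₂ - u + (π₂ - v)) = -(π₂ - (u + v)) := by abel
  have hQ : -π₂ - (π₂ - u + (π₂ - v)) = -(-π₂ - (u + v)) := by
    linear_combination (norm := module)
      (-2 : ℤ) • coe_pi_div_two_add_self - Real.Angle.coe_pi_add_coe_pi
  have hM : π + (π₂ - u - (π₂ - v)) = -(π + (u - v)) := by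
    linear_combination (norm := module) Real.Angle.coe_pi_add_coe_pi
  rw [edgeWeight, edgeWeight, hM, hA, hP, hQ, hW, hW, hW, hW, cos_reflect₁_add, cos_reflect₁_add,
    cos_reflect₁_sub, cos_reflect₁_sub, neg_mul_neg]

lemma edgeWeight_reflect₂_reflect₂ (hW : W.Even) :
    edgeWeight W (-π₂ - u) (-π₂ - v) = edgeWeight W u v := by
  have hA : -π₂ - u - (-π₂ - v) = -(u - v) := by abel
  have hP : π₂ - (-π₂ - u + (-π₂ - v)) = -(π₂ - (u + v)) := by
    linear_combination (norm := module)
      (2 : ℤ) • coe_pi_div_two_add_self + Real.Angle.coe_pi_add_coe_pi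
  have hQ : -π₂ - (-π₂ - u + (-π₂ - v)) = -(-π₂ - (u + v)) := by abel
  have hM : π + (-π₂ - u - (-π₂ - v)) = -(π + (u - v)) := by
    linear_combination (norm := module) Real.Angle.coe_pi_add_coe_pi
  rw [edgeWeight, edgeWeight, hM, hA, hP, hQ, hW, hW, hW, hW, cos_reflect₂_add, cos_reflect₂_add,
    cos_reflect₂_sub, cos_reflect₂_sub, neg_mul_neg]

lemma edgeWeight_reflect₁_left (hu : (u + π₄).cos ≠ 0) (hv : (v + π₄).cos ≠ 0) (b : Bool) :
    edgeWeight W (π₂ - u) v false b = edgeWeight W u v false b := by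
  have hA : π₂ - u - v = π₂ - (u + v) := by abel
  have hP : π₂ - (π₂ - u + v) = u - v := by abel
  have hQ : -π₂ - (π₂ - u + v) = π + (u - v) := by
    linear_combination (norm := module) -coe_pi_div_two_add_self - Real.Angle.coe_pi_add_coe_pi
  have hM : π + (π₂ - u - v) = -π₂ - (u + v) := by
    linear_combination (norm := module) coe_pi_div_two_add_self + Real.Angle.coe_pi_add_coe_pi
  rw [edgeWeight, edgeWeight, hM, hA, hP, hQ, cos_reflect₁_add, cos_reflect₁_sub]
  exact quadrantWeight_swap_first (neg_mul_pos_iff_not_mul_pos hu hv) b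

lemma edgeWeight_reflect₂_left (hu : (u - π₄).cos ≠ 0) (hv : (v - π₄).cos ≠ 0) (a : Bool) :
    edgeWeight W (-π₂ - u) v a false = edgeWeight W u v a false := by
  have hA : -π₂ - u - v = -π₂ - (u + v) := by abel
  have hP : π₂ - (-π₂ - u + v) = π + (u - v) := by
    linear_combination (norm := module) coe_pi_div_two_add_self
  have hQ : -π₂ - (-π₂ - u + v) = u - v := by abel
  have hM : π + (-π₂ - u - v) = π₂ - (u + v) := by
    linear_combination (norm := module) -coe_pi_div_two_add_self
  rw [edgeWeight, edgeWeight, hM, hA, hP, hQ, cos_reflect₂_add, cos_reflect₂_sub]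
  exact quadrantWeight_swap_second (neg_mul_pos_iff_not_mul_pos hu hv) a

end edgeWeight

lemma spinDensity_mul_bondWeight2 {V : Type} [Fintype V] [LinearOrder V] (G : SimpleGraph V)
    [DecidableRel G.Adj] {W : Spin → ℝ} (hW : ∀ s, 0 < W s) (θ : V → Spin)
    (b : (Sym2 V → Bool) × (Sym2 V → Bool)) :
    spinDensity G W θ * bondWeight2 G W θ b =
      ∏ e ∈ G.edgeFinset, ENNReal.ofReal (edgeWeight W (θ e.inf) (θ e.sup) (b.1 e) (b.2 e)) := by
  rw [spinDensity, bondWeight2, ← Finset.prod_mul_distrib]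
  refine Finset.prod_congr rfl fun e _ => ?_
  rw [← ENNReal.ofReal_mul (hW _).le, mul_pairWeight_eq_edgeWeight (hW _).ne']

section cluster

variable {V : Type} (G : SimpleGraph V)

def reflectedCluster (B : Finset V) (z : V) (c : Sym2 V → Bool) : Set V :=
  {y | (openGraph G c).Reachable z y ∧ ¬connToBdry G B z c}

variable {G}

lemma reflectedCluster_closed {B : Finset V} {z : V} {c : Sym2 V → Bool} {x y : V}
    (hxy : G.Adj x y) (hc : c s(x, y) = true) (hx : x ∈ reflectedCluster G B z c) :
    y ∈ reflectedCluster G B z c :=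
  ⟨hx.1.trans (SimpleGraph.Adj.reachable (G := openGraph G c) ⟨hxy, hc⟩), hx.2⟩

lemma disjoint_reflectedCluster (B : Finset V) (z : V) (c : Sym2 V → Bool) :
    Disjoint (reflectedCluster G B z c) B :=
  Set.disjoint_left.2 fun y hy hyB => hy.2 ⟨y, hyB, hy.1⟩

variable [Fintype V] [LinearOrder V]

open Classical in
lemma flipMap2_apply (B : Finset V) (z : V) (r : Spin → Spin)
    (sel : (Sym2 V → Bool) × (Sym2 V → Bool) → Sym2 V → Bool)
    (ω : (V → Spin) × ((Sym2 V → Bool) × (Sym2 V → Bool))) :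
    flipMap2 G B z r sel ω =
      (fun y => if y ∈ reflectedCluster G B z (sel ω.2) then r (ω.1 y) else ω.1 y, ω.2) := by
  unfold flipMap2
  split_ifs with h <;> ext y <;> simp [reflectedCluster, connToBdry, h]

lemma flipMap2_involutive (B : Finset V) (z : V) {r : Spin → Spin} (hr : Function.Involutive r)
    (sel : (Sym2 V → Bool) × (Sym2 V → Bool) → Sym2 V → Bool) :
    Function.Involutive (flipMap2 G B z r sel) := by
  intro ω
  rw [flipMap2_apply, flipMap2_apply]
  refine Prod.ext (funext fun y => ?_) rfl
  dsimp only
  split_ifs <;> simp [hr _]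

open Classical in
lemma prod_edgeFinset_reflect_of_closed [DecidableRel G.Adj] {α M : Type*} [CommMonoid M]
    {c : Sym2 V → Bool} {C : Set V} (hC : ∀ x y, G.Adj x y → c s(x, y) = true → x ∈ C → y ∈ C)
    {r : α → α} {S : Set α} {θ : V → α} (hθ : ∀ y, θ y ∈ S) (F : Sym2 V → α → α → M)
    (hsymm : ∀ e u v, F e u v = F e v u) (hboth : ∀ e u v, F e (r u) (r v) = F e u v)
    (hone : ∀ e, c e = false → ∀ u ∈ S, ∀ v ∈ S, F e (r u) v = F e u v) :
    ∏ e ∈ G.edgeFinset, F e (if e.inf ∈ C then r (θ e.inf) else θ e.inf)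
        (if e.sup ∈ C then r (θ e.sup) else θ e.sup) =
      ∏ e ∈ G.edgeFinset, F e (θ e.inf) (θ e.sup) := by
  refine Finset.prod_congr rfl fun e he => ?_
  have he' : s(e.inf, e.sup) = e := Sym2.sortEquiv.symm_apply_apply e
  have hadj : G.Adj e.inf e.sup := by rwa [SimpleGraph.mem_edgeFinset, ← he'] at he
  have hclosed (hmixed : ¬(e.inf ∈ C ↔ e.sup ∈ C)) : c e = false := by
    refine Bool.eq_false_iff.2 fun hopen => hmixed ⟨hC _ _ hadj (by rwa [he']), ?_⟩
    exact hC _ _ hadj.symm (by rwa [Sym2.eq_swap, he'])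
  by_cases hinf : e.inf ∈ C <;> by_cases hsup : e.sup ∈ C <;>
    simp only [hinf, hsup, if_true, if_false]
  · exact hboth e _ _
  · exact hone e (hclosed (by tauto)) _ (hθ _) _ (hθ _)
  · rw [hsymm, hone e (hclosed (by tauto)) _ (hθ _) _ (hθ _), hsymm]

end cluster

def extDensity2 {V : Type} [Fintype V] [LinearOrder V] (G : SimpleGraph V) [DecidableRel G.Adj]
    (W : Spin → ℝ) (ω : (V → Spin) × ((Sym2 V → Bool) × (Sym2 V → Bool))) : ENNReal :=
  spinDensity G W ω.1 * bondWeight2 G W ω.1 ω.2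

section density

variable {V : Type} [Fintype V] [LinearOrder V] (G : SimpleGraph V) [DecidableRel G.Adj]
  (B : Finset V) (z : V) {W : Spin → ℝ} (hW : IsWeight W) {θ : V → Spin}
  (b : (Sym2 V → Bool) × (Sym2 V → Bool))
include hW

lemma extDensity2_flipMap2_reflect₁ (hθ : ∀ y, (θ y + π₄).cos ≠ 0) :
    extDensity2 G W (flipMap2 G B z (fun u => π₂ - u) Prod.fst (θ, b)) =
      extDensity2 G W (θ, b) := by
  rw [flipMap2_apply]
  simp only [extDensity2, spinDensity_mul_bondWeight2 G hW.pos]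
  exact prod_edgeFinset_reflect_of_closed (fun _ _ => reflectedCluster_closed)
    (S := {u | (u + π₄).cos ≠ 0}) hθ
    (fun e u v => ENNReal.ofReal (edgeWeight W u v (b.1 e) (b.2 e)))
    (fun e u v => by rw [edgeWeight_comm u v hW.even])
    (fun e u v => by rw [edgeWeight_reflect₁_reflect₁ u v hW.even])
    (fun e he u hu v hv => by rw [he, edgeWeight_reflect₁_left u v hu hv])

lemma extDensity2_flipMap2_reflect₂ (hθ : ∀ y, (θ y - π₄).cos ≠ 0) :
    extDensity2 G W (flipMap2 G B z (fun u => -π₂ - u) Prod.snd (θ, b)) =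
      extDensity2 G W (θ, b) := by
  rw [flipMap2_apply]
  simp only [extDensity2, spinDensity_mul_bondWeight2 G hW.pos]
  exact prod_edgeFinset_reflect_of_closed (fun _ _ => reflectedCluster_closed)
    (S := {u | (u - π₄).cos ≠ 0}) hθ
    (fun e u v => ENNReal.ofReal (edgeWeight W u v (b.1 e) (b.2 e)))
    (fun e u v => by rw [edgeWeight_comm u v hW.even])
    (fun e u v => by rw [edgeWeight_reflect₂_reflect₂ u v hW.even])
    (fun e he u hu v hv => by rw [he, edgeWeight_reflect₂_left u v hu hv])

end density

section measure

instance : BorelSpace Spin := inferInstanceAs (BorelSpace (AddCircle (2 * π)))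

instance : SecondCountableTopology Spin :=
  inferInstanceAs (SecondCountableTopology (AddCircle (2 * π)))

instance : (volume : Measure Spin).IsAddHaarMeasure :=
  inferInstanceAs ((volume : Measure (AddCircle (2 * π))).IsAddHaarMeasure)

instance : (volume : Measure Spin).IsNegInvariant :=
  inferInstanceAs ((volume : Measure (AddCircle (2 * π))).IsNegInvariant)

instance : IsFiniteMeasure (volume : Measure Spin) :=
  inferInstanceAs (IsFiniteMeasure (volume : Measure (AddCircle (2 * π))))

instance : NullSingletonClass (volume : Measure Spin) where
  measure_singleton x :=
    measure_mono_null (Set.singleton_subset_iff.2 (Metric.mem_closedBall_self le_rfl))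
      ((AddCircle.volume_closedBall (T := 2 * π) (x := x) 0).trans (by simp))

instance {V : Type} [DecidableEq V] (B : Finset V) (v : V) :
    IsFiniteMeasure (if v ∈ B then Measure.dirac (0 : Spin) else volume) := by
  split_ifs <;> infer_instance

lemma MeasureTheory.MeasurePreserving.withDensity_of_comp_ae_eq {α : Type*} [MeasurableSpace α]
    {μ : Measure α} {T : α → α} (hT : MeasurePreserving T μ μ) (hTe : MeasurableEmbedding T)
    {f : α → ENNReal} (hf : f ∘ T =ᵐ[μ] f) :
    MeasurePreserving T (μ.withDensity f) (μ.withDensity f) := by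
  refine ⟨hT.measurable, Measure.ext fun s hs => ?_⟩
  rw [Measure.map_apply hT.measurable hs, withDensity_apply _ (hT.measurable hs),
    withDensity_apply _ hs, ← hT.setLIntegral_comp_preimage_emb hTe f s]
  exact setLIntegral_congr_fun_ae (hT.measurable hs) (hf.mono fun ω h _ => h.symm)

lemma measurePreserving_fiberwise_prod_count {α β : Type*} [MeasurableSpace α] [MeasurableSpace β]
    [Countable β] [MeasurableSingletonClass β] {μ : Measure α} [SFinite μ] {F : β → α → α}
    (hF : ∀ b, MeasurePreserving (F b) μ μ) :
    MeasurePreserving (fun p : α × β => (F p.2 p.1, p.2)) (μ.prod Measure.count)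
      (μ.prod Measure.count) := by
  have hFm : Measurable fun p : α × β => F p.2 p.1 :=
    measurable_from_prod_countable_left fun b => (hF b).measurable
  have hskew := (MeasurePreserving.id (Measure.count : Measure β)).skew_product
    (hFm.comp measurable_swap) (Filter.Eventually.of_forall fun b => (hF b).map_eq)
  exact Measure.measurePreserving_swap.comp (hskew.comp Measure.measurePreserving_swap)

variable {V : Type} [Fintype V] [LinearOrder V]

instance (B : Finset V) : IsFiniteMeasure (spinBase B) := by
  unfold spinBase
  infer_instance

open Classical in
lemma measurePreserving_spinBase_reflect {B : Finset V} {C : Set V} (hC : Disjoint C B)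
    {r : Spin → Spin} (hr : MeasurePreserving r volume volume) :
    MeasurePreserving (fun θ y => if y ∈ C then r (θ y) else θ y) (spinBase B) (spinBase B) := by
  refine measurePreserving_pi (fun v => if v ∈ B then Measure.dirac (0 : Spin) else volume)
    (fun v => if v ∈ B then Measure.dirac (0 : Spin) else volume)
    (f := fun y u => if y ∈ C then r u else u) fun y => ?_
  by_cases hy : y ∈ C
  · have hyB : y ∉ B := Set.disjoint_left.1 hC hy
    simp only [hy, hyB, if_true, if_false]
    exact hr
  · simp only [hy, if_false]
    exact MeasurePreserving.id _

lemma measurePreserving_flipMap2_base (G : SimpleGraph V) (B : Finset V) (z : V)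
    {r : Spin → Spin} (hr : MeasurePreserving r volume volume)
    (sel : (Sym2 V → Bool) × (Sym2 V → Bool) → Sym2 V → Bool) :
    MeasurePreserving (flipMap2 G B z r sel) ((spinBase B).prod Measure.count)
      ((spinBase B).prod Measure.count) := by
  rw [funext (flipMap2_apply B z r sel)]
  exact measurePreserving_fiberwise_prod_count fun b =>
    measurePreserving_spinBase_reflect (disjoint_reflectedCluster B z (sel b)) hr

lemma ae_cos_add_ne_zero (B : Finset V) {a : Spin} (ha : a.cos ≠ 0) :
    ∀ᵐ θ ∂spinBase B, ∀ y, (θ y + a).cos ≠ 0 := by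
  unfold spinBase
  refine ae_all_iff.2 fun y => (Measure.tendsto_eval_ae_ae (i := y)
    (μ := fun v => if v ∈ B then Measure.dirac (0 : Spin) else volume)).eventually
    (p := fun u => (u + a).cos ≠ 0) ?_
  split_ifs
  · simpa [ae_dirac_eq] using ha
  · refine measure_mono_null (fun u hu => ?_)
      ((Set.toFinite {π₂ - a, ((-π / 2 : ℝ) : Spin) - a}).measure_zero _)
    rcases Real.Angle.cos_eq_zero_iff.1 (not_not.1 hu) with h | h
    · exact Or.inl (eq_sub_of_add_eq h)
    · exact Or.inr (eq_sub_of_add_eq h)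

lemma measurePreserving_flipMap2_of_ae {G : SimpleGraph V} [DecidableRel G.Adj] {B : Finset V}
    {z : V} {W : Spin → ℝ} {r : Spin → Spin} (hr : MeasurePreserving r volume volume)
    (hr' : Function.Involutive r) {sel : (Sym2 V → Bool) × (Sym2 V → Bool) → Sym2 V → Bool}
    (hdens : ∀ᵐ ω ∂(spinBase B).prod Measure.count,
      extDensity2 G W (flipMap2 G B z r sel ω) = extDensity2 G W ω) :
    MeasurePreserving (flipMap2 G B z r sel) (extP2 G W B) (extP2 G W B) := by
  have hT := measurePreserving_flipMap2_base G B z hr sel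
  have hTe := (MeasurableEquiv.ofInvolutive _ (flipMap2_involutive B z hr' sel)
    hT.measurable).measurableEmbedding
  exact (hT.withDensity_of_comp_ae_eq hTe (f := extDensity2 G W) hdens).smul_measure _

end measure

theorem statement_4_general {V : Type} [Fintype V] [LinearOrder V]
    (G : SimpleGraph V) [DecidableRel G.Adj]
    (B : Finset V)
    (W : Spin → ℝ) (hW : IsWeight W)
    (z : V) :
    MeasurePreserving (flipMap2 G B z (fun u => ((π / 2 : ℝ) : Spin) - u) Prod.fst)
        (extP2 G W B) (extP2 G W B) ∧
      MeasurePreserving (flipMap2 G B z (fun u => ((-(π / 2) : ℝ) : Spin) - u) Prod.snd)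
        (extP2 G W B) (extP2 G W B) := by
  have hbase (a : Spin) (ha : a.cos ≠ 0) :
      ∀ᵐ ω ∂(spinBase B).prod (Measure.count : Measure ((Sym2 V → Bool) × (Sym2 V → Bool))),
        ∀ y, (ω.1 y + a).cos ≠ 0 :=
    Measure.quasiMeasurePreserving_fst.ae (ae_cos_add_ne_zero B ha)
  have hcos : Real.Angle.cos π₄ ≠ 0 := by
    rw [Real.Angle.cos_coe, Real.cos_pi_div_four]
    positivity
  simp only [Real.Angle.coe_neg]
  constructor
  · refine measurePreserving_flipMap2_of_ae (Measure.measurePreserving_sub_left volume _)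
      (fun u => sub_sub_cancel _ u) ?_
    filter_upwards [hbase π₄ hcos] with ω hω
    exact extDensity2_flipMap2_reflect₁ G B z hW ω.2 hω
  · refine measurePreserving_flipMap2_of_ae (Measure.measurePreserving_sub_left volume _)
      (fun u => sub_sub_cancel _ u) ?_
    filter_upwards [hbase (-π₄) (by rwa [Real.Angle.cos_neg])] with ω hω
    exact extDensity2_flipMap2_reflect₂ G B z hW ω.2 fun y => by
      simpa [sub_eq_add_neg] using hω y

/-- In the two-cluster extended model `(u,e¹,e²)` with
boundary condition `1`, assuming the pointwise coupling constraints
`max(0,p+q-1) ≤ c ≤ min(p,q)`, the maps `σ̄_1^z` (reflecting the `C₁`-cluster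
of `z` by `R₁ : θ ↦ π/2 - θ`) and `σ̄_2^z` (reflecting the `C₂`-cluster of `z`
by `R₂ : θ ↦ -π/2 - θ`) both preserve the joint law of `(u,e¹,e²)`. -/
theorem statement_4 {V : Type} [Fintype V] [LinearOrder V]
    (G : SimpleGraph V) [DecidableRel G.Adj] (hG : G.Connected)
    (B : Finset V) (hB : B.Nonempty)
    (W : Spin → ℝ) (hW : IsWeight W)
    (hc : ∀ u₁ u₂ : Spin,
      max 0 (pBond2 W u₁ u₂ + qBond2 W u₁ u₂ - 1) ≤ cBond2 W u₁ u₂ ∧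
      cBond2 W u₁ u₂ ≤ min (pBond2 W u₁ u₂) (qBond2 W u₁ u₂))
    (z : V) :
    MeasurePreserving (flipMap2 G B z (fun u => ((π / 2 : ℝ) : Spin) - u) Prod.fst)
        (extP2 G W B) (extP2 G W B) ∧
      MeasurePreserving (flipMap2 G B z (fun u => ((-(π / 2) : ℝ) : Spin) - u) Prod.snd)
        (extP2 G W B) (extP2 G W B) :=
  statement_4_general G B W hW z

end
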